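/- arXiv:1806.11097 — 12 statements merged into one kernel-verified Lean document; each statement's English description precedes it below -/
import Mathlib

section
/- If S is a numerical semigroup, then S is pseudo-symmetric if and only if its set of pseudo-Frobenius numbers equals {F(S), F(S)/2}. -/
/-- A numerical semigroup: a cofinite additive submonoid of ℕ. -/
def IsNumericalSemigroup (S : Set ℕ) : Prop :=
  0 ∈ S ∧ (∀ a ∈ S, ∀ b ∈ S, a + b ∈ S) ∧ Sᶜ.Finite

/-- `F` is the Frobenius number of `S`: the largest natural number not in `S`. -/
def IsFrobenius (S : Set ℕ) (F : ℕ) : Prop :=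
  F ∉ S ∧ ∀ n : ℕ, n ∉ S → n ≤ F

/-- The set of pseudo-Frobenius numbers of `S`. -/
def PF (S : Set ℕ) : Set ℕ :=
  {x | x ∉ S ∧ ∀ s ∈ S, s ≠ 0 → x + s ∈ S}

/-- The genus of `S`: the number of gaps. -/
noncomputable def genus (S : Set ℕ) : ℕ := Sᶜ.ncard

/-- The type of `S`: the number of pseudo-Frobenius numbers. -/
noncomputable def typ (S : Set ℕ) : ℕ := (PF S).ncard

/-- The gaps of the second type: gaps `x` such that `F - x` is also a gap. -/
def Lset (S : Set ℕ) (F : ℕ) : Set ℕ := {x | x ∉ S ∧ F - x ∉ S}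

/-- `S` is symmetric with Frobenius number `F`: for every integer `x`,
exactly one of `x ∈ S`, `F - x ∈ S` holds (expressed over `ℕ`). -/
def IsSymmetric (S : Set ℕ) (F : ℕ) : Prop :=
  ∀ x : ℕ, x ≤ F → (x ∈ S ↔ F - x ∉ S)

/-- `S` is pseudo-symmetric with Frobenius number `F`. -/
def IsPseudoSymmetric (S : Set ℕ) (F : ℕ) : Prop :=
  Even F ∧ ∀ x : ℕ, x ≤ F → 2 * x ≠ F → (x ∈ S ↔ F - x ∉ S)

/-- `S` is irreducible: it is not the intersection of two numerical semigroups
properly containing it. -/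
def IsIrreducibleNS (S : Set ℕ) : Prop :=
  IsNumericalSemigroup S ∧
    ¬ ∃ S₁ S₂ : Set ℕ, IsNumericalSemigroup S₁ ∧ IsNumericalSemigroup S₂ ∧
      S ⊂ S₁ ∧ S ⊂ S₂ ∧ S = S₁ ∩ S₂

/-- `x` is a minimal generator of `S`: a nonzero element of `S` that is not a
sum of two nonzero elements of `S`. -/
def IsMinGen (S : Set ℕ) (x : ℕ) : Prop :=
  x ∈ S ∧ x ≠ 0 ∧ ¬ ∃ a ∈ S, ∃ b ∈ S, a ≠ 0 ∧ b ≠ 0 ∧ x = a + b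

/-- `m` is the multiplicity of `S`: its least positive element. -/
def IsMultiplicity (S : Set ℕ) (m : ℕ) : Prop :=
  m ∈ S ∧ m ≠ 0 ∧ ∀ s ∈ S, s ≠ 0 → m ≤ s

theorem stmt1 (S : Set ℕ) (F : ℕ) (hS : IsNumericalSemigroup S) (hF : IsFrobenius S F) :
    IsPseudoSymmetric S F ↔ PF S = {F, F / 2} := by
  obtain ⟨h0, hadd, hfin⟩ := hS
  have hmem : ∀ n, F < n → n ∈ S := by
    intro n hn; by_contra h; exact absurd (hF.2 n h) (not_le.mpr hn)
  have hFS : F ∉ S := hF.1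
  have hFne : F ≠ 0 := fun h => hFS (h ▸ h0)
  have hFPF : F ∈ PF S := ⟨hFS, fun s hs hs0 => hmem _ (by omega)⟩
  have climb : ∀ n x, F - x ≤ n → x ∉ S → ∃ t ∈ S, x + t ∈ PF S := by
    intro n
    induction n with
    | zero =>
      intro x hx hxS
      have hxF : x ≤ F := hF.2 x hxS
      have : x = F := by omega
      exact ⟨0, h0, by simpa [this] using hFPF⟩
    | succ n ih =>
      intro x hx hxS
      by_cases hp : x ∈ PF S
      · exact ⟨0, h0, by simpa using hp⟩
      · have : ∃ s ∈ S, s ≠ 0 ∧ x + s ∉ S := by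
          by_contra hc
          push_neg at hc
          exact hp ⟨hxS, fun s hs hs0 => hc s hs hs0⟩
        obtain ⟨s, hs, hs0, hxs⟩ := this
        have h1 : x + s ≤ F := hF.2 _ hxs
        obtain ⟨t, ht, hpf⟩ := ih (x + s) (by omega) hxs
        exact ⟨s + t, hadd s hs t ht, by rwa [← add_assoc]⟩
  constructor
  · rintro ⟨hev, hps⟩
    obtain ⟨k, hk⟩ := hev
    have hk2 : F / 2 = k := by omega
    ext y
    simp only [Set.mem_insert_iff, Set.mem_singleton_iff]
    constructor
    · rintro ⟨hyS, hy⟩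
      by_contra hc
      push_neg at hc
      obtain ⟨hc1, hc2⟩ := hc
      have hyF : y ≤ F := hF.2 y hyS
      have h2y : 2 * y ≠ F := by omega
      have := (hps y hyF h2y).not.mp (by simpa using hyS)
      simp only [not_not] at this
      have hne : F - y ≠ 0 := by omega
      have := hy (F - y) this hne
      rw [show y + (F - y) = F by omega] at this
      exact hFS this
    · rintro (rfl | rfl)
      · exact hFPF
      · rw [hk2]
        have hkS : k ∉ S := fun h => hFS (by have := hadd k h k h; rwa [← hk] at this)
        refine ⟨hkS, fun s hs hs0 => ?_⟩
        by_contra hks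
        have h1 : k + s ≤ F := hF.2 _ hks
        have h2 : 2 * (k + s) ≠ F := by omega
        have := (hps (k + s) h1 h2).not.mp (by simpa using hks)
        simp only [not_not] at this
        rw [show F - (k + s) = k - s by omega] at this
        have hsk : s ≤ k := by omega
        have := hadd _ this s hs
        rw [show k - s + s = k by omega] at this
        exact hkS this
  · intro hPF
    have hk2PF : F / 2 ∈ PF S := by rw [hPF]; right; rfl
    have hk2S : F / 2 ∉ S := hk2PF.1
    have hev : Even F := by
      by_contra hodd
      rw [Nat.not_even_iff] at hodd
      set k := F / 2 with hkdef
      have hFk : F = 2 * k + 1 := by omega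
      have hk1 : F - k ∉ S := by
        intro h
        have hne : F - k ≠ 0 := by omega
        have := hk2PF.2 (F - k) h hne
        rw [show F / 2 + (F - F / 2) = F by omega] at this
        exact hFS this
      obtain ⟨t, ht, hpf⟩ := climb (F - (F - k)) (F - k) le_rfl hk1
      rw [hPF] at hpf
      simp only [Set.mem_insert_iff, Set.mem_singleton_iff] at hpf
      rcases hpf with h | h
      · have : t = k := by omega
        exact hk2S (this ▸ ht)
      · omega
    obtain ⟨k, hk⟩ := hev
    have hk2 : F / 2 = k := by omega
    rw [hk2] at hk2PF hk2S
    refine ⟨⟨k, hk⟩, fun x hxF h2x => ?_⟩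
    constructor
    · intro hxS hFx
      have := hadd x hxS (F - x) hFx
      rw [show x + (F - x) = F by omega] at this
      exact hFS this
    · intro hFx
      by_contra hxS
      obtain ⟨t, ht, hpt⟩ := climb (F - x) x le_rfl hxS
      obtain ⟨u, hu, hpu⟩ := climb (F - (F - x)) (F - x) le_rfl hFx
      rw [hPF, hk2] at hpt hpu
      simp only [Set.mem_insert_iff, Set.mem_singleton_iff] at hpt hpu
      rcases hpt with h1 | h1
      · have : t = F - x := by omega
        exact hFx (this ▸ ht)
      · rcases hpu with h2 | h2
        · have : u = x := by omega
          exact hxS (this ▸ hu)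
        · omega
end

section
/- For every numerical semigroup S, the genus satisfies g(S) ≥ (F(S) + t(S))/2, where t(S) is the type of S. -/
theorem stmt2 (S : Set ℕ) (F : ℕ) (hS : IsNumericalSemigroup S) (hF : IsFrobenius S F) :
    F + typ S ≤ 2 * genus S := by
  obtain ⟨h0, hadd, hfin⟩ := hS
  obtain ⟨hFnS, hFmax⟩ := hF
  set A : Set ℕ := S ∩ Set.Iic F with hA
  have hAfin : A.Finite := (Set.finite_Iic F).subset Set.inter_subset_right
  -- partition of Iic F
  have hpart : Set.Iic F = A ∪ Sᶜ := by
    ext n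
    simp only [hA, Set.mem_Iic, Set.mem_union, Set.mem_inter_iff, Set.mem_compl_iff]
    constructor
    · intro h
      by_cases hn : n ∈ S
      · exact Or.inl ⟨hn, h⟩
      · exact Or.inr hn
    · rintro (⟨_, h2⟩ | h)
      · exact h2
      · exact hFmax n h
  have hdisj : Disjoint A Sᶜ := by
    rw [Set.disjoint_left]
    rintro x ⟨hx, _⟩ hx'
    exact hx' hx
  have hcard1 : F + 1 = A.ncard + genus S := by
    have h1 := Set.ncard_union_eq hdisj hAfin hfin
    rw [← hpart] at h1
    have h2 : (Set.Iic F).ncard = F + 1 := by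
      rw [← Nat.card_coe_set_eq, Nat.card_eq_card_toFinset]
      simp [Set.toFinset_Iic]
    rw [h2] at h1
    exact h1
  -- the image of A under x ↦ F - x
  set B : Set ℕ := (fun x => F - x) '' A with hB
  have hBcard : B.ncard = A.ncard := by
    apply Set.ncard_image_of_injOn
    rintro x ⟨_, hx⟩ y ⟨_, hy⟩ hxy
    simp only [Set.mem_Iic] at hx hy
    dsimp only at hxy
    omega
  have hsplit : Sᶜ = B ∪ Lset S F := by
    ext y
    simp only [Set.mem_compl_iff, Set.mem_union, hB, Set.mem_image, Lset, Set.mem_setOf_eq,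
      hA, Set.mem_inter_iff, Set.mem_Iic]
    constructor
    · intro hy
      by_cases hFy : F - y ∈ S
      · left
        refine ⟨F - y, ⟨hFy, by omega⟩, ?_⟩
        have := hFmax y hy
        omega
      · exact Or.inr ⟨hy, hFy⟩
    · rintro (⟨x, ⟨hxS, hxF⟩, rfl⟩ | ⟨hy, _⟩)
      · intro hcon
        have : x + (F - x) ∈ S := hadd x hxS _ hcon
        rw [Nat.add_sub_cancel' hxF] at this
        exact hFnS this
      · exact hy
  have hLdisj : Disjoint B (Lset S F) := by
    rw [Set.disjoint_left]
    rintro y ⟨x, ⟨hxS, hxF⟩, rfl⟩ ⟨_, hy2⟩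
    simp only [Set.mem_Iic] at hxF
    have : F - (F - x) = x := by omega
    rw [this] at hy2
    exact hy2 hxS
  have hBfin : B.Finite := hAfin.image _
  have hLfin : (Lset S F).Finite := hfin.subset (fun x hx => hx.1)
  have hcard2 : genus S = A.ncard + (Lset S F).ncard := by
    have h1 := Set.ncard_union_eq hLdisj hBfin hLfin
    rw [← hsplit, hBcard] at h1
    exact h1
  -- PF ⊆ Lset ∪ {F}
  have hPFsub : PF S ⊆ Lset S F ∪ {F} := by
    rintro x ⟨hxS, hx⟩
    by_cases hxF : x = F
    · exact Or.inr hxF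
    · left
      refine ⟨hxS, fun hcon => ?_⟩
      have hxle : x ≤ F := hFmax x hxS
      have hne : F - x ≠ 0 := by omega
      have : x + (F - x) ∈ S := hx _ hcon hne
      rw [Nat.add_sub_cancel' hxle] at this
      exact hFnS this
  have htyp : typ S ≤ (Lset S F).ncard + 1 := by
    calc typ S ≤ (Lset S F ∪ {F}).ncard :=
          Set.ncard_le_ncard hPFsub (hLfin.union (Set.finite_singleton F))
      _ ≤ (Lset S F).ncard + ({F} : Set ℕ).ncard := Set.ncard_union_le _ _
      _ = (Lset S F).ncard + 1 := by rw [Set.ncard_singleton]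
  omega
end

section
/- A numerical semigroup S is almost symmetric if and only if PF(S) = L(S) ∪ {F(S)}, where L(S) is the set of gaps x of S with F(S) - x also a gap. -/
theorem stmt3 (S : Set ℕ) (F : ℕ) (hS : IsNumericalSemigroup S) (hF : IsFrobenius S F) :
    Lset S F ⊆ PF S ↔ PF S = Lset S F ∪ {F} := by
  have hFPF : F ∈ PF S := by
    refine ⟨hF.1, fun s hs hs0 => ?_⟩
    by_contra h
    have := hF.2 _ h
    omega
  have hsub : PF S ⊆ Lset S F ∪ {F} := by
    intro x hx
    rcases eq_or_ne x F with rfl | hne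
    · exact Or.inr rfl
    left
    refine ⟨hx.1, fun h => ?_⟩
    have hxF : x ≤ F := hF.2 _ hx.1
    have hFx0 : F - x ≠ 0 := by omega
    have := hx.2 _ h hFx0
    have : F ∈ S := by
      have hx' : x + (F - x) = F := by omega
      rwa [hx'] at this
    exact hF.1 this
  constructor
  · intro hL
    apply Set.Subset.antisymm hsub
    intro x hx
    rcases hx with hx | hx
    · exact hL hx
    · rw [Set.mem_singleton_iff] at hx
      rw [hx]
      exact hFPF
  · intro h x hx
    rw [h]
    exact Or.inl hx
end

section
/- A numerical semigroup S is almost symmetric if and only if g(S) = (F(S) + t(S))/2, i.e., 2·g(S) = F(S) + t(S). -/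
theorem stmt4 (S : Set ℕ) (F : ℕ) (hS : IsNumericalSemigroup S) (hF : IsFrobenius S F) :
    Lset S F ⊆ PF S ↔ 2 * genus S = F + typ S := by
  obtain ⟨h0, hadd, hfin⟩ := hS
  obtain ⟨hFS, hFmax⟩ := hF
  set A : Set ℕ := {x | x ∉ S ∧ F - x ∈ S} with hA
  set L : Set ℕ := Lset S F with hL
  set B : Set ℕ := S ∩ Set.Iic F with hB
  have hLfin : L.Finite := hfin.subset (fun x hx => hx.1)
  have hAfin : A.Finite := hfin.subset (fun x hx => hx.1)
  have hBfin : B.Finite := (Set.finite_Iic F).subset (fun x hx => hx.2)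
  have hcompl : Sᶜ = A ∪ L := by
    ext x; simp only [hA, hL, Lset, Set.mem_union, Set.mem_setOf_eq, Set.mem_compl_iff]
    tauto
  have hdisj : Disjoint A L := by
    rw [Set.disjoint_left]; rintro x ⟨_, h1⟩ ⟨_, h2⟩; exact h2 h1
  have hg : genus S = A.ncard + L.ncard := by
    rw [genus, hcompl, Set.ncard_union_eq hdisj hAfin hLfin]
  have hIic : Set.Iic F = B ∪ Sᶜ := by
    ext x
    simp only [hB, Set.mem_union, Set.mem_inter_iff, Set.mem_Iic, Set.mem_compl_iff]
    constructor
    · intro hx; by_cases h : x ∈ S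
      · exact Or.inl ⟨h, hx⟩
      · exact Or.inr h
    · rintro (⟨_, h⟩ | h)
      · exact h
      · exact hFmax x h
  have hdisj2 : Disjoint B Sᶜ := by
    rw [Set.disjoint_left]; rintro x ⟨h1, _⟩ h2; exact h2 h1
  have hcount : F + 1 = B.ncard + genus S := by
    have : (Set.Iic F).ncard = B.ncard + Sᶜ.ncard := by
      rw [hIic, Set.ncard_union_eq hdisj2 hBfin hfin]
    rw [genus, ← this]
    have : Set.Iic F = ↑(Finset.Iic F) := by ext x; simp
    rw [this, Set.ncard_coe_finset, Nat.card_Iic]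
  have himg : (fun x => F - x) '' A = B := by
    ext y
    simp only [Set.mem_image, hA, hB, Set.mem_setOf_eq, Set.mem_inter_iff, Set.mem_Iic]
    constructor
    · rintro ⟨x, ⟨hx1, hx2⟩, rfl⟩
      exact ⟨hx2, Nat.sub_le F x⟩
    · rintro ⟨hy1, hy2⟩
      refine ⟨F - y, ⟨?_, ?_⟩, ?_⟩
      · intro hc
        by_cases hy0 : y = 0
        · subst hy0; simp at hc; exact hFS hc
        · have := hadd _ hc _ hy1
          rw [Nat.sub_add_cancel hy2] at this
          exact hFS this
      · rwa [Nat.sub_sub_self hy2]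
      · rw [Nat.sub_sub_self hy2]
  have hinj : Set.InjOn (fun x => F - x) A := by
    intro x hx y hy hxy
    have hx' : x ≤ F := hFmax x hx.1
    have hy' : y ≤ F := hFmax y hy.1
    simp only at hxy; omega
  have hab : A.ncard = B.ncard := by
    rw [← himg, Set.ncard_image_of_injOn hinj]
  have hFPF : F ∈ PF S := by
    refine ⟨hFS, fun s hs hs0 => ?_⟩
    by_contra hc
    have := hFmax _ hc
    omega
  have hFL : F ∉ L := fun h => h.2 (by simpa using h0)
  have hPFsub : PF S ⊆ insert F L := by
    rintro x ⟨hx1, hx2⟩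
    have hxF : x ≤ F := hFmax x hx1
    rcases eq_or_lt_of_le hxF with rfl | hlt
    · exact Set.mem_insert _ _
    · refine Set.mem_insert_of_mem _ ⟨hx1, fun hc => ?_⟩
      have := hx2 _ hc (by omega)
      rw [Nat.add_sub_cancel' hxF] at this
      exact hFS this
  have hPFeq : PF S = insert F (PF S ∩ L) := by
    ext x
    constructor
    · intro hx
      rcases hPFsub hx with h | h
      · exact h ▸ Set.mem_insert _ _
      · exact Set.mem_insert_of_mem _ ⟨hx, h⟩
    · rintro (rfl | ⟨h, _⟩)
      · exact hFPF
      · exact h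
  have hPLfin : (PF S ∩ L).Finite := hLfin.subset Set.inter_subset_right
  have ht : typ S = (PF S ∩ L).ncard + 1 := by
    conv_lhs => rw [typ, hPFeq]
    exact Set.ncard_insert_of_notMem (fun h => hFL h.2) hPLfin
  constructor
  · intro hsub
    have heq : PF S ∩ L = L := by
      apply Set.eq_of_subset_of_subset Set.inter_subset_right
      exact fun x hx => ⟨hsub hx, hx⟩
    have hlt : (PF S ∩ L).ncard = L.ncard := by rw [heq]
    omega
  · intro heq
    have h1 : (PF S ∩ L).ncard = L.ncard := by omega
    have h2 : PF S ∩ L = L :=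
      Set.eq_of_subset_of_ncard_le Set.inter_subset_right (le_of_eq h1.symm) hLfin
    intro x hx
    have : x ∈ PF S ∩ L := by rw [h2]; exact hx
    exact this.1
end

section
/- Let F be a positive integer. There exists an almost symmetric numerical semigroup S with F(S) = F and t(S) = t if and only if F + t is an even number less than or equal to 2F. -/
theorem stmt7 (F t : ℕ) (hF : 0 < F) (ht : 0 < t) :
    (∃ S : Set ℕ, IsNumericalSemigroup S ∧ IsFrobenius S F ∧ typ S = t ∧
      2 * genus S = F + typ S) ↔ Even (F + t) ∧ F + t ≤ 2 * F := by
  constructor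
  · rintro ⟨S, ⟨h0, hadd, hfin⟩, ⟨hFnot, hFmax⟩, hty, hAS⟩
    have hg : genus S ≤ F := by
      have hsub : Sᶜ ⊆ Set.Icc 1 F := by
        intro x hx
        simp only [Set.mem_compl_iff] at hx
        refine Set.mem_Icc.2 ⟨?_, hFmax x hx⟩
        rcases Nat.eq_zero_or_pos x with h | h
        · exact absurd (h ▸ h0) hx
        · exact h
      have h1 : genus S ≤ (Set.Icc 1 F).ncard :=
        Set.ncard_le_ncard hsub (Set.finite_Icc _ _)
      have h2 : (Set.Icc 1 F).ncard = F := by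
        rw [← Finset.coe_Icc, Set.ncard_coe_finset, Nat.card_Icc]
        omega
      omega
    refine ⟨⟨genus S, by omega⟩, by omega⟩
  · rintro ⟨⟨m, hm⟩, hle⟩
    obtain ⟨a, ha⟩ : ∃ a, F = 2 * a + t := ⟨m - t, by omega⟩
    subst ha
    refine ⟨insert 0 {x | a + t ≤ x ∧ x ≠ 2 * a + t}, ⟨?_, ?_, ?_⟩, ⟨?_, ?_⟩, ?_, ?_⟩
    · exact Set.mem_insert 0 _
    · intro x hx y hy
      simp only [Set.mem_insert_iff, Set.mem_setOf_eq] at *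
      omega
    · have hc : (insert 0 {x | a + t ≤ x ∧ x ≠ 2 * a + t} : Set ℕ)ᶜ
          = ↑((Finset.Icc 1 (a + t - 1)) ∪ {2 * a + t}) := by
        ext x
        simp only [Set.mem_compl_iff, Set.mem_insert_iff, Set.mem_setOf_eq,
          Finset.coe_union, Set.mem_union, Finset.coe_Icc, Set.mem_Icc,
          Finset.coe_singleton, Set.mem_singleton_iff]
        omega
      rw [hc]
      exact Finset.finite_toSet _
    · simp only [Set.mem_insert_iff, Set.mem_setOf_eq]
      omega
    · intro n hn
      simp only [Set.mem_insert_iff, Set.mem_setOf_eq] at hn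
      omega
    · have hPF : PF (insert 0 {x | a + t ≤ x ∧ x ≠ 2 * a + t})
          = ↑((Finset.Icc (a + 1) (a + t - 1)) ∪ {2 * a + t}) := by
        ext x
        simp only [PF, Set.mem_insert_iff, Set.mem_setOf_eq, Finset.coe_union,
          Set.mem_union, Finset.coe_Icc, Set.mem_Icc, Finset.coe_singleton,
          Set.mem_singleton_iff]
        constructor
        · rintro ⟨hxn, hxs⟩
          by_cases hx : x = 2 * a + t
          · right; exact hx
          · left
            constructor
            · by_contra hxa
              push_neg at hxa
              have := hxs (2 * a + t - x) (by omega) (by omega)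
              omega
            · omega
        · rintro (⟨h1, h2⟩ | h)
          · refine ⟨by omega, ?_⟩
            intro s hs hs0
            rcases hs with h | h
            · omega
            · omega
          · refine ⟨by omega, ?_⟩
            intro s hs hs0
            rcases hs with h | h
            · omega
            · omega
      rw [typ, hPF, Set.ncard_coe_finset,
        Finset.card_union_of_disjoint (by simp [Finset.disjoint_singleton_right]; omega),
        Nat.card_Icc]
      simp
      omega
    · have hc : (insert 0 {x | a + t ≤ x ∧ x ≠ 2 * a + t} : Set ℕ)ᶜ
          = ↑((Finset.Icc 1 (a + t - 1)) ∪ {2 * a + t}) := by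
        ext x
        simp only [Set.mem_compl_iff, Set.mem_insert_iff, Set.mem_setOf_eq,
          Finset.coe_union, Set.mem_union, Finset.coe_Icc, Set.mem_Icc,
          Finset.coe_singleton, Set.mem_singleton_iff]
        omega
      have hPF : PF (insert 0 {x | a + t ≤ x ∧ x ≠ 2 * a + t})
          = ↑((Finset.Icc (a + 1) (a + t - 1)) ∪ {2 * a + t}) := by
        ext x
        simp only [PF, Set.mem_insert_iff, Set.mem_setOf_eq, Finset.coe_union,
          Set.mem_union, Finset.coe_Icc, Set.mem_Icc, Finset.coe_singleton,
          Set.mem_singleton_iff]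
        constructor
        · rintro ⟨hxn, hxs⟩
          by_cases hx : x = 2 * a + t
          · right; exact hx
          · left
            constructor
            · by_contra hxa
              push_neg at hxa
              have := hxs (2 * a + t - x) (by omega) (by omega)
              omega
            · omega
        · rintro (⟨h1, h2⟩ | h)
          · refine ⟨by omega, ?_⟩
            intro s hs hs0
            rcases hs with h | h
            · omega
            · omega
          · refine ⟨by omega, ?_⟩
            intro s hs hs0
            rcases hs with h | h
            · omega
            · omega
      rw [genus, typ, hc, hPF, Set.ncard_coe_finset, Set.ncard_coe_finset,
        Finset.card_union_of_disjoint (by simp [Finset.disjoint_singleton_right]; omega),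
        Finset.card_union_of_disjoint (by simp [Finset.disjoint_singleton_right]; omega),
        Nat.card_Icc, Nat.card_Icc]
      simp
      omega
end

section
/- C(F) is the unique irreducible numerical semigroup with Frobenius number F all of whose minimal generators are larger than F/2. -/
/-- `C(F)`: for odd `F` it is `{0} ∪ {n ≥ (F+1)/2 : n ≠ F}` and for even `F`
it is `{0} ∪ {n ≥ F/2 + 1 : n ≠ F}`; in natural division both equal
`{0} ∪ {n ≥ F/2 + 1 : n ≠ F}` for odd `F` as well, but we keep the case split. -/
def Cnum (F : ℕ) : Set ℕ :=
  if Odd F then {0} ∪ {n : ℕ | (F + 1) / 2 ≤ n ∧ n ≠ F}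
  else {0} ∪ {n : ℕ | F / 2 + 1 ≤ n ∧ n ≠ F}

lemma mem_Cnum {F n : ℕ} : n ∈ Cnum F ↔ n = 0 ∨ (F < 2 * n ∧ n ≠ F) := by
  rcases Nat.even_or_odd F with hE | hO
  · have h2 : F % 2 = 0 := Nat.even_iff.mp hE
    have hno : ¬ Odd F := by simp [Nat.odd_iff, h2]
    simp only [Cnum, if_neg hno, Set.mem_union, Set.mem_singleton_iff, Set.mem_setOf_eq]
    omega
  · have h2 : F % 2 = 1 := Nat.odd_iff.mp hO
    simp only [Cnum, if_pos hO, Set.mem_union, Set.mem_singleton_iff, Set.mem_setOf_eq]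
    omega

lemma Cnum_NS (F : ℕ) : IsNumericalSemigroup (Cnum F) := by
  refine ⟨mem_Cnum.mpr (Or.inl rfl), ?_, ?_⟩
  · intro a ha b hb
    rw [mem_Cnum] at ha hb ⊢
    omega
  · apply Set.Finite.subset (Set.finite_Iic F)
    intro n hn
    simp only [Set.mem_compl_iff, mem_Cnum] at hn
    simp only [Set.mem_Iic]
    omega

lemma Cnum_Frob (F : ℕ) (hF : 0 < F) : IsFrobenius (Cnum F) F := by
  constructor
  · rw [mem_Cnum]; omega
  · intro n hn
    rw [mem_Cnum] at hn
    omega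

lemma mem_of_gt_Frob {S : Set ℕ} {F : ℕ} (h : IsFrobenius S F) {n : ℕ} (hn : F < n) :
    n ∈ S := by
  by_contra hns
  exact absurd (h.2 n hns) (by omega)

/-- Helper: no numerical semigroup avoiding F strictly contains Cnum F. -/
lemma Cnum_maximal {F : ℕ} (hF : 0 < F) {T : Set ℕ} (hT : IsNumericalSemigroup T)
    (hsub : Cnum F ⊂ T) (hFT : F ∉ T) : False := by
  obtain ⟨x, hxT, hxC⟩ := Set.exists_of_ssubset hsub
  rw [mem_Cnum] at hxC
  have hx0 : x ≠ 0 := fun h => hxC (Or.inl h)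
  have hxF : x ≠ F := fun h => hFT (h ▸ hxT)
  have h2x : 2 * x ≤ F := by
    by_contra h
    exact hxC (Or.inr ⟨by omega, hxF⟩)
  have h2xne : 2 * x ≠ F := by
    intro h
    have : x + x ∈ T := hT.2.1 x hxT x hxT
    rw [show x + x = 2 * x by ring, h] at this
    exact hFT this
  have hFx : F - x ∈ Cnum F := by
    rw [mem_Cnum]; omega
  have hFxT : F - x ∈ T := hsub.1 hFx
  have : x + (F - x) ∈ T := hT.2.1 x hxT (F - x) hFxT
  rw [show x + (F - x) = F by omega] at this
  exact hFT this

theorem stmt10 (F : ℕ) (hF : 0 < F) :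
    (IsIrreducibleNS (Cnum F) ∧ IsFrobenius (Cnum F) F ∧
      (∀ x : ℕ, IsMinGen (Cnum F) x → F < 2 * x)) ∧
    ∀ S : Set ℕ, IsIrreducibleNS S → IsFrobenius S F →
      (∀ x : ℕ, IsMinGen S x → F < 2 * x) → S = Cnum F := by
  have hCF : IsFrobenius (Cnum F) F := Cnum_Frob F hF
  constructor
  · refine ⟨⟨Cnum_NS F, ?_⟩, hCF, ?_⟩
    · rintro ⟨S₁, S₂, h1, h2, hs1, hs2, heq⟩
      have hFnot : F ∉ S₁ ∩ S₂ := heq ▸ hCF.1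
      rcases (by tauto : F ∉ S₁ ∨ F ∉ S₂) with h | h
      · exact Cnum_maximal hF h1 hs1 h
      · exact Cnum_maximal hF h2 hs2 h
    · intro x hx
      have := hx.1
      rw [mem_Cnum] at this
      rcases this with h | h
      · exact absurd h hx.2.1
      · exact h.1
  · intro S hirr hfrob hgen
    classical
    -- multiplicity
    have hne : ∃ n, n ∈ S ∧ n ≠ 0 :=
      ⟨F + 1, mem_of_gt_Frob hfrob (by omega), by omega⟩
    set m := Nat.find hne with hm
    have hmP : m ∈ S ∧ m ≠ 0 := Nat.find_spec hne
    have hmmin : ∀ s ∈ S, s ≠ 0 → m ≤ s := fun s hs hs0 => Nat.find_min' hne ⟨hs, hs0⟩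
    have hmgen : IsMinGen S m := by
      refine ⟨hmP.1, hmP.2, ?_⟩
      rintro ⟨a, ha, b, hb, ha0, hb0, hab⟩
      have := hmmin a ha ha0
      have := hmmin b hb hb0
      omega
    have hFm : F < 2 * m := hgen m hmgen
    -- S ⊆ Cnum F
    have hsub : S ⊆ Cnum F := by
      intro s hs
      rw [mem_Cnum]
      by_cases hs0 : s = 0
      · exact Or.inl hs0
      · have h1 := hmmin s hs hs0
        have h2 : s ≠ F := fun h => hfrob.1 (h ▸ hs)
        right; constructor <;> omega
    by_contra hne'
    have hss : S ⊂ Cnum F := ⟨hsub, fun h => hne' (Set.Subset.antisymm hsub h)⟩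
    -- S₂ = insert F S
    have hS2 : IsNumericalSemigroup (insert F S) := by
      obtain ⟨h0, hcl, hfin⟩ := hirr.1
      refine ⟨Or.inr h0, ?_, ?_⟩
      · intro a ha b hb
        rcases ha with rfl | ha <;> rcases hb with rfl | hb
        · exact Or.inr (mem_of_gt_Frob hfrob (by omega))
        · by_cases hb0 : b = 0
          · subst hb0; exact Or.inl rfl
          · exact Or.inr (mem_of_gt_Frob hfrob (by omega))
        · by_cases ha0 : a = 0
          · subst ha0; simp
          · exact Or.inr (mem_of_gt_Frob hfrob (by omega))
        · exact Or.inr (hcl a ha b hb)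
      · exact hfin.subset (fun n hn => by
          simp only [Set.mem_compl_iff, Set.mem_insert_iff, not_or] at hn ⊢
          exact hn.2)
    have hss2 : S ⊂ insert F S := by
      refine ⟨Set.subset_insert _ _, fun h => hfrob.1 (h (Set.mem_insert F S))⟩
    refine hirr.2 ⟨Cnum F, insert F S, Cnum_NS F, hS2, hss, hss2, ?_⟩
    apply Set.Subset.antisymm
    · exact Set.subset_inter hsub (Set.subset_insert _ _)
    · rintro x ⟨hxC, hxS2⟩
      rcases hxS2 with rfl | hxS
      · exact absurd hxC hCF.1
      · exact hxS
end

section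
/- Let S' be an irreducible numerical semigroup with Frobenius number F and let A be a set of minimal generators of S' such that F/2 < x < F for all x ∈ A and x + y - F ∉ S' \ A for all x, y ∈ A. Then S = S' \ A is an almost symmetric numerical semigroup with F(S) = F and t(S) = 2·#A + t(S'). -/
/-!
An irreducible numerical semigroup `S'` is symmetric or pseudo-symmetric: off `F / 2`, exactly one
of `x` and `F - x` lies in `S'`. Counting gaps through the involution `x ↦ F - x` gives
`2 g(S') = F + t(S')`, with `PF(S') = {F}` or `{F / 2, F}`. Removing the minimal generators `A`
adds `#A` gaps, and the pseudo-Frobenius numbers of `S' \ A` are those of `S'` together with `A`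
and `F - A`; the hypotheses on `A` are exactly what keeps `PF(S')` and `F - A` pseudo-Frobenius.
Hence `g` grows by `#A` and `t` by `2 #A`, and `2 g = F + t` persists.
-/

section NumericalSemigroup

variable {S : Set ℕ} {F : ℕ}

theorem IsFrobenius.mem_of_lt (hF : IsFrobenius S F) {n : ℕ} (hn : F < n) : n ∈ S :=
  not_not.1 fun h => (hF.2 n h).not_gt hn

theorem IsFrobenius.pos (hF : IsFrobenius S F) (hS : IsNumericalSemigroup S) : 0 < F :=
  Nat.pos_of_ne_zero fun h => hF.1 (h ▸ hS.1)

theorem IsFrobenius.mem_PF (hF : IsFrobenius S F) : F ∈ PF S :=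
  ⟨hF.1, fun _ _ hs0 => hF.mem_of_lt (by omega)⟩

theorem IsFrobenius.notMem_of_two_mul_eq (hF : IsFrobenius S F) (hS : IsNumericalSemigroup S)
    {c : ℕ} (hc : 2 * c = F) : c ∉ S := fun hcS =>
  hF.1 (by simpa [← hc, two_mul] using hS.2.1 c hcS c hcS)

theorem IsFrobenius.sub_notMem (hF : IsFrobenius S F) (hS : IsNumericalSemigroup S) {x : ℕ}
    (hx : x ≤ F) (hxS : x ∈ S) : F - x ∉ S := fun hFx =>
  hF.1 (by simpa [Nat.add_sub_cancel' hx] using hS.2.1 x hxS (F - x) hFx)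

theorem IsNumericalSemigroup.insert_of_mem_PF (hS : IsNumericalSemigroup S) {h : ℕ}
    (hh : h ∈ PF S) (h2 : h + h ∈ S) : IsNumericalSemigroup (insert h S) := by
  obtain ⟨h0, hadd, hfin⟩ := hS
  have hshift : ∀ s ∈ S, h + s ∈ insert h S := fun s hs => by
    rcases eq_or_ne s 0 with rfl | hs0
    · simp
    · exact Set.mem_insert_of_mem _ (hh.2 s hs hs0)
  refine ⟨Set.mem_insert_of_mem _ h0, ?_,
    hfin.subset (Set.compl_subset_compl.2 (Set.subset_insert _ _))⟩
  rintro a (rfl | ha) b (rfl | hb)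
  · exact Set.mem_insert_of_mem _ h2
  · exact hshift b hb
  · rw [add_comm]
    exact hshift a ha
  · exact Set.mem_insert_of_mem _ (hadd a ha b hb)

theorem IsIrreducibleNS.eq_of_mem_PF (hirr : IsIrreducibleNS S) (hF : IsFrobenius S F) {h : ℕ}
    (hh : h ∈ PF S) (h2 : h + h ∈ S) : h = F := by
  by_contra hne
  have hF2 : F + F ∈ S := hF.mem_of_lt (by have := hF.pos hirr.1; omega)
  refine hirr.2 ⟨insert h S, insert F S, hirr.1.insert_of_mem_PF hh h2,
    hirr.1.insert_of_mem_PF hF.mem_PF hF2, Set.ssubset_insert hh.1, Set.ssubset_insert hF.1, ?_⟩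
  ext n
  simp only [Set.mem_inter_iff, Set.mem_insert_iff]
  grind

theorem IsIrreducibleNS.sub_mem_of_notMem (hirr : IsIrreducibleNS S) (hF : IsFrobenius S F)
    {x : ℕ} (hx : x ≤ F) (h2x : 2 * x ≠ F) (hxS : x ∉ S) : F - x ∈ S := by
  classical
  by_contra hFx
  set H := (Finset.range (F + 1)).filter fun y => y ∉ S ∧ F - y ∉ S ∧ 2 * y ≠ F
  have hxH : x ∈ H := Finset.mem_filter.2 ⟨Finset.mem_range.2 (by omega), hxS, hFx, h2x⟩
  obtain ⟨h, hhH, hmax⟩ := H.exists_max_image id ⟨x, hxH⟩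
  obtain ⟨hhlt, hhS, hFh, h2h⟩ := by simpa [H] using hhH
  have hle : ∀ y, y ∉ S → F - y ∉ S → 2 * y ≠ F → y ≤ h := fun y hyS hFy h2y =>
    hmax y (Finset.mem_filter.2 ⟨Finset.mem_range.2 (Nat.lt_succ_of_le (hF.2 y hyS)), hyS, hFy, h2y⟩)
  have hhalf : F < 2 * h := by
    by_contra hlt
    have := hle (F - h) hFh (by rwa [Nat.sub_sub_self (by omega)]) (by omega)
    omega
  -- `h` is the largest counterexample, so `h + s` cannot be one
  have hPF : h ∈ PF S := by
    refine ⟨hhS, fun s hs hs0 => ?_⟩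
    by_contra hhs
    have hFhs : F - (h + s) ∈ S := by
      by_contra hFhs
      have := hle (h + s) hhs hFhs (by omega)
      omega
    have hsum := hirr.1.2.1 _ hFhs s hs
    rw [show F - (h + s) + s = F - h by have := hF.2 _ hhs; omega] at hsum
    exact hFh hsum
  have hhF : h = F := hirr.eq_of_mem_PF hF hPF (hF.mem_of_lt (by omega))
  exact hFh (by simpa [hhF] using hirr.1.1)

theorem IsIrreducibleNS.mem_PF_iff (hirr : IsIrreducibleNS S) (hF : IsFrobenius S F) {p : ℕ} :
    p ∈ PF S ↔ p = F ∨ 2 * p = F := by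
  constructor
  · intro hp
    by_contra! hne
    have hpF : p ≤ F := hF.2 p hp.1
    have hFp := hirr.sub_mem_of_notMem hF hpF hne.2 hp.1
    exact hF.1 (by simpa [Nat.add_sub_cancel' hpF] using hp.2 _ hFp (by omega))
  · rintro (rfl | h2p)
    · exact hF.mem_PF
    · have hpS : p ∉ S := hF.notMem_of_two_mul_eq hirr.1 h2p
      refine ⟨hpS, fun s hs hs0 => ?_⟩
      by_contra hps
      have hsum := hirr.1.2.1 _ (hirr.sub_mem_of_notMem hF (hF.2 _ hps) (by omega) hps) s hs
      rw [show F - (p + s) + s = p by have := hF.2 _ hps; omega] at hsum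
      exact hpS hsum

theorem IsIrreducibleNS.typ_eq_card_half_add_one (hirr : IsIrreducibleNS S)
    (hF : IsFrobenius S F) : typ S = ((Finset.range (F + 1)).filter fun c => 2 * c = F).card + 1 := by
  have hPF : PF S = ↑(insert F ((Finset.range (F + 1)).filter fun c => 2 * c = F)) := by
    ext p
    simp only [hirr.mem_PF_iff hF, Finset.coe_insert, Finset.coe_filter, Finset.mem_range,
      Set.mem_insert_iff, Set.mem_ofPred_eq]
    omega
  have := hF.pos hirr.1
  rw [typ, hPF, Set.ncard_coe_finset, Finset.card_insert_of_notMem]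
  exact fun hFH => by have := (Finset.mem_filter.1 hFH).2; omega

theorem IsIrreducibleNS.two_mul_genus (hirr : IsIrreducibleNS S) (hF : IsFrobenius S F) :
    2 * genus S = F + typ S := by
  classical
  have htyp := hirr.typ_eq_card_half_add_one hF
  set H := (Finset.range (F + 1)).filter fun c => 2 * c = F
  set M := (Finset.range (F + 1)).filter fun x => 2 * x ≠ F
  have hHM : H.card + M.card = F + 1 := by
    rw [Finset.card_filter_add_card_filter_not, Finset.card_range]
  have hM : (M.filter (· ∈ S)).card + (M.filter (· ∉ S)).card = M.card :=
    Finset.card_filter_add_card_filter_not _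
  have hswap : (M.filter (· ∉ S)).card = (M.filter (· ∈ S)).card := by
    refine Finset.card_nbij' (F - ·) (F - ·) ?_ ?_ ?_ ?_ <;> intro x hx <;>
      simp only [M, Finset.mem_coe, Finset.mem_filter, Finset.mem_range] at hx ⊢ <;>
      obtain ⟨⟨hxF, h2x⟩, hxS⟩ := hx
    · exact ⟨⟨by omega, by omega⟩, hirr.sub_mem_of_notMem hF (by omega) h2x hxS⟩
    · exact ⟨⟨by omega, by omega⟩, hF.sub_notMem hirr.1 (by omega) hxS⟩
    · show F - (F - x) = x
      omega
    · show F - (F - x) = x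
      omega
  have hgenus : genus S = (M.filter (· ∉ S)).card + H.card := by
    have hgaps : Sᶜ = ↑(M.filter (· ∉ S) ∪ H) := by
      ext x
      simp only [M, H, Set.mem_compl_iff, Finset.coe_union, Finset.coe_filter, Finset.mem_range,
        Set.mem_union, Set.mem_ofPred_eq, Finset.mem_filter]
      constructor
      · intro hx
        have := hF.2 x hx
        exact if h2x : 2 * x = F then .inr ⟨by omega, h2x⟩ else .inl ⟨⟨by omega, h2x⟩, hx⟩
      · rintro (⟨_, hx⟩ | ⟨_, h2x⟩) hxS
        · exact hx hxS
        · exact hF.notMem_of_two_mul_eq hirr.1 h2x hxS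
    rw [genus, hgaps, Set.ncard_coe_finset, Finset.card_union_of_disjoint]
    refine Finset.disjoint_left.2 fun x h₁ h₂ => ?_
    simp only [M, H, Finset.mem_filter] at h₁ h₂
    exact h₁.1.2 h₂.2
  omega

end NumericalSemigroup

section RemovingGenerators

variable {S : Set ℕ} {F : ℕ}

theorem IsNumericalSemigroup.sdiff_of_isMinGen (hS : IsNumericalSemigroup S) {A : Set ℕ}
    (hA : A.Finite) (hgen : ∀ x ∈ A, IsMinGen S x) : IsNumericalSemigroup (S \ A) := by
  obtain ⟨h0, hadd, hfin⟩ := hS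
  refine ⟨⟨h0, fun h0A => (hgen 0 h0A).2.1 rfl⟩, ?_, by rw [Set.compl_sdiff]; exact hA.union hfin⟩
  rintro a ⟨ha, haA⟩ b ⟨hb, hbA⟩
  refine ⟨hadd a ha b hb, fun habA => ?_⟩
  rcases eq_or_ne a 0 with rfl | ha0
  · exact hbA (by simpa using habA)
  rcases eq_or_ne b 0 with rfl | hb0
  · exact haA (by simpa using habA)
  exact (hgen _ habA).2.2 ⟨a, ha, b, hb, ha0, hb0, rfl⟩

theorem IsFrobenius.sdiff (hF : IsFrobenius S F) {A : Set ℕ} (hA : ∀ x ∈ A, x ≤ F) :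
    IsFrobenius (S \ A) F := by
  refine ⟨fun h => hF.1 h.1, fun n hn => ?_⟩
  by_cases hnS : n ∈ S
  · exact hA n (by_contra fun hnA => hn ⟨hnS, hnA⟩)
  · exact hF.2 n hnS

theorem genus_sdiff (hfin : Sᶜ.Finite) {A : Finset ℕ} (hAS : ↑A ⊆ S) :
    genus (S \ ↑A) = genus S + A.card := by
  rw [genus, genus, Set.compl_sdiff, Set.union_comm,
    Set.ncard_union_eq (Set.disjoint_compl_left_iff_subset.2 hAS) hfin A.finite_toSet,
    Set.ncard_coe_finset]

theorem IsNumericalSemigroup.mem_PF_sdiff_of_isMinGen (hS : IsNumericalSemigroup S) {A : Set ℕ}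
    (hgen : ∀ x ∈ A, IsMinGen S x) {x : ℕ} (hx : x ∈ A) : x ∈ PF (S \ A) := by
  obtain ⟨hxS, hx0, -⟩ := hgen x hx
  exact ⟨fun h => h.2 hx, fun s hs hs0 => ⟨hS.2.1 x hxS s hs.1,
    fun hxsA => (hgen _ hxsA).2.2 ⟨x, hxS, s, hs.1, hx0, hs0, rfl⟩⟩⟩

theorem IsIrreducibleNS.PF_subset_PF_sdiff (hirr : IsIrreducibleNS S) (hF : IsFrobenius S F)
    {A : Set ℕ} (hSA : IsNumericalSemigroup (S \ A)) (hrange : ∀ x ∈ A, x < F)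
    (hcond : ∀ x ∈ A, ∀ y ∈ A, x + y - F ∉ S \ A) : PF S ⊆ PF (S \ A) := by
  intro p hp
  refine ⟨fun h => hp.1 h.1, fun s hs hs0 => ⟨hp.2 s hs.1 hs0, fun hpsA => ?_⟩⟩
  rcases (hirr.mem_PF_iff hF).1 hp with rfl | h2p
  · exact absurd (hrange _ hpsA) (by omega)
  · refine hcond _ hpsA _ hpsA ?_
    rw [show p + s + (p + s) - F = s + s by omega]
    exact hSA.2.1 s hs s hs

theorem IsIrreducibleNS.sub_mem_PF_sdiff (hirr : IsIrreducibleNS S) (hF : IsFrobenius S F)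
    {A : Set ℕ} (hSA : IsNumericalSemigroup (S \ A)) (hgen : ∀ x ∈ A, IsMinGen S x)
    (hrange : ∀ x ∈ A, F < 2 * x ∧ x < F) (hcond : ∀ x ∈ A, ∀ y ∈ A, x + y - F ∉ S \ A)
    {x : ℕ} (hx : x ∈ A) : F - x ∈ PF (S \ A) := by
  obtain ⟨hx2, hxF⟩ := hrange x hx
  obtain ⟨hxS, -, hxmin⟩ := hgen x hx
  refine ⟨fun h => hF.sub_notMem hirr.1 hxF.le hxS h.1, fun s hs hs0 => ?_⟩
  rcases lt_or_ge s x with hsx | hxs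
  · have hxs : x - s ∉ S := fun h => hxmin ⟨x - s, h, s, hs.1, by omega, hs0, by omega⟩
    have h2 : 2 * (x - s) ≠ F := fun h2 => hcond x hx x hx (by
      rw [show x + x - F = s + s by omega]
      exact hSA.2.1 s hs s hs)
    have hFxs := hirr.sub_mem_of_notMem hF (by omega) h2 hxs
    rw [show F - (x - s) = F - x + s by omega] at hFxs
    exact ⟨hFxs, fun h => hcond x hx _ h (by rwa [show x + (F - x + s) - F = s by omega])⟩
  · have hsx : s ≠ x := fun h => hs.2 (h ▸ hx)
    exact ⟨hF.mem_of_lt (by omega), fun h => by have := (hrange _ h).2; omega⟩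

theorem IsIrreducibleNS.PF_sdiff_subset (hirr : IsIrreducibleNS S) (hF : IsFrobenius S F)
    {A : Set ℕ} : PF (S \ A) ⊆ PF S ∪ A ∪ (F - ·) '' A := by
  intro p hp
  by_cases hpA : p ∈ A
  · exact .inl (.inr hpA)
  have hpS : p ∉ S := fun h => hp.1 ⟨h, hpA⟩
  have hpF := hF.2 p hpS
  by_cases h2p : p = F ∨ 2 * p = F
  · exact .inl (.inl ((hirr.mem_PF_iff hF).2 h2p))
  obtain ⟨hpF', h2p⟩ := not_or.1 h2p
  have hFp := hirr.sub_mem_of_notMem hF hpF h2p hpS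
  refine .inr ⟨F - p, by_contra fun hFpA => hF.1 ?_, by simp only; omega⟩
  simpa [Nat.add_sub_cancel' hpF] using (hp.2 _ ⟨hFp, hFpA⟩ (by omega)).1

theorem IsIrreducibleNS.typ_sdiff (hirr : IsIrreducibleNS S) (hF : IsFrobenius S F)
    {A : Finset ℕ} (hgen : ∀ x ∈ A, IsMinGen S x) (hrange : ∀ x ∈ A, F < 2 * x ∧ x < F)
    (hcond : ∀ x ∈ A, ∀ y ∈ A, x + y - F ∉ S \ ↑A) :
    typ (S \ ↑A) = 2 * A.card + typ S := by
  have hSA := hirr.1.sdiff_of_isMinGen A.finite_toSet hgen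
  have hPF : PF (S \ ↑A) = PF S ∪ ↑A ∪ (F - ·) '' ↑A :=
    (hirr.PF_sdiff_subset hF).antisymm <| Set.union_subset
      (Set.union_subset (hirr.PF_subset_PF_sdiff hF hSA (fun x hx => (hrange x hx).2) hcond)
        fun _ => hirr.1.mem_PF_sdiff_of_isMinGen hgen)
      (Set.image_subset_iff.2 fun _ => hirr.sub_mem_PF_sdiff hF hSA hgen hrange hcond)
  have hPFfin : (PF S).Finite := hirr.1.2.2.subset fun _ hp => hp.1
  have hd1 : Disjoint (PF S) ↑A := Set.disjoint_left.2 fun p hp hpA => hp.1 (hgen p hpA).1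
  -- `F - A` lies below `F / 2`, while `PF S` and `A` lie above it
  have hd2 : Disjoint (PF S ∪ ↑A) ((F - ·) '' ↑A) := by
    refine Set.disjoint_left.2 ?_
    rintro _ (hp | hp) ⟨x, hx, rfl⟩ <;> beta_reduce at hp <;> have := hrange x hx
    · rcases (hirr.mem_PF_iff hF).1 hp with h | h <;> omega
    · have := hrange _ hp
      omega
  have hinj : ((F - ·) '' (↑A : Set ℕ)).ncard = A.card := by
    rw [Set.InjOn.ncard_image, Set.ncard_coe_finset]
    intro x hx y hy hxy
    have := (hrange x hx).2
    have := (hrange y hy).2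
    simp only at hxy
    omega
  rw [typ, typ, hPF, Set.ncard_union_eq hd2 (hPFfin.union A.finite_toSet) (A.finite_toSet.image _),
    Set.ncard_union_eq hd1 hPFfin A.finite_toSet, hinj, Set.ncard_coe_finset]
  omega

end RemovingGenerators

theorem stmt11 (S' : Set ℕ) (F : ℕ) (A : Finset ℕ)
    (hirr : IsIrreducibleNS S') (hF : IsFrobenius S' F)
    (hgen : ∀ x ∈ A, IsMinGen S' x)
    (hrange : ∀ x ∈ A, F < 2 * x ∧ x < F)
    (hcond : ∀ x ∈ A, ∀ y ∈ A, x + y - F ∉ S' \ ↑A) :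
    IsNumericalSemigroup (S' \ ↑A) ∧ IsFrobenius (S' \ ↑A) F ∧
    2 * genus (S' \ ↑A) = F + typ (S' \ ↑A) ∧
    typ (S' \ ↑A) = 2 * A.card + typ S' := by
  have htyp := hirr.typ_sdiff hF hgen hrange hcond
  refine ⟨hirr.1.sdiff_of_isMinGen A.finite_toSet hgen,
    hF.sdiff fun x hx => (hrange x hx).2.le, ?_, htyp⟩
  rw [genus_sdiff hirr.1.2.2 fun x hx => (hgen x hx).1, htyp]
  have := hirr.two_mul_genus hF
  omega
end

section
/- For every numerical semigroup S with S ≠ ℕ, the multiplicity satisfies m(S) ≥ t(S) + 1. -/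
theorem stmt13 (S : Set ℕ) (m : ℕ) (hS : IsNumericalSemigroup S)
    (hne : S ≠ Set.univ) (hm : IsMultiplicity S m) :
    typ S + 1 ≤ m := by
  obtain ⟨hmS, hm0, hmin⟩ := hm
  obtain ⟨h0, hadd, hfin⟩ := hS
  have hmul : ∀ k : ℕ, k * m ∈ S := by
    intro k
    induction k with
    | zero => simpa using h0
    | succ n ih => rw [Nat.succ_mul]; exact hadd _ ih _ hmS
  have hmaps : Set.MapsTo (· % m) (PF S) (Set.Ioo 0 m) := by
    intro x hx
    constructor
    · rcases Nat.eq_zero_or_pos (x % m) with h | h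
      · exfalso
        obtain ⟨k, hk⟩ := Nat.dvd_of_mod_eq_zero h
        exact hx.1 (by rw [hk, Nat.mul_comm]; exact hmul k)
      · exact h
    · exact Nat.mod_lt _ (Nat.pos_of_ne_zero hm0)
  have hinj : Set.InjOn (· % m) (PF S) := by
    have key : ∀ x ∈ PF S, ∀ y ∈ PF S, x % m = y % m → x ≤ y → x = y := by
      intro x hx y hy hmod hle
      by_contra hne'
      have hlt : x < y := lt_of_le_of_ne hle hne'
      have hdvd : m ∣ y - x := (Nat.modEq_iff_dvd' hle).mp hmod
      obtain ⟨k, hk⟩ := hdvd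
      have hk0 : m * k ≠ 0 := by
        intro h
        omega
      have : x + m * k ∈ S := hx.2 _ (by rw [Nat.mul_comm]; exact hmul k) hk0
      have hxy : y = x + m * k := by omega
      exact hy.1 (hxy ▸ this)
    intro x hx y hy h
    rcases le_total x y with hle | hle
    · exact key x hx y hy h hle
    · exact (key y hy x hx h.symm hle).symm
  have hfinI : (Set.Ioo 0 m).Finite := Set.finite_Ioo 0 m
  have hcard : typ S ≤ (Set.Ioo 0 m).ncard :=
    Set.ncard_le_ncard_of_injOn _ hmaps hinj hfinI
  have : (Set.Ioo 0 m).ncard = m - 1 := by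
    rw [← Finset.coe_Ioo, Set.ncard_coe_finset, Nat.card_Ioo]; omega
  omega
end

section
/- For every positive integer F, the unique numerical semigroup with Frobenius number F and type F is M(F) = {0} ∪ {n ≥ F+1}. -/
theorem stmt15 (F : ℕ) (hF : 0 < F) (S : Set ℕ)
    (hS : IsNumericalSemigroup S) (hFr : IsFrobenius S F) (ht : typ S = F) :
    S = {0} ∪ {n : ℕ | F + 1 ≤ n} := by
  obtain ⟨h0, hadd, hfin⟩ := hS
  obtain ⟨hFne, hFle⟩ := hFr
  -- PF S ⊆ Icc 1 F
  have hsub : PF S ⊆ Set.Icc 1 F := by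
    rintro x ⟨hx, -⟩
    refine ⟨?_, hFle x hx⟩
    rcases Nat.eq_zero_or_pos x with rfl | h
    · exact absurd h0 hx
    · exact h
  have hIcc : (Set.Icc 1 F).ncard = F := by
    rw [show (Set.Icc 1 F) = ↑(Finset.Icc 1 F) by simp, Set.ncard_coe_finset]
    simp
  have hPF : PF S = Set.Icc 1 F := by
    exact Set.eq_of_subset_of_ncard_le hsub (by rw [hIcc, ← ht]; exact le_rfl) (Set.finite_Icc 1 F)
  ext n
  simp only [Set.mem_union, Set.mem_singleton_iff, Set.mem_setOf_eq]
  constructor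
  · intro hn
    by_contra h
    push_neg at h
    obtain ⟨hn0, hnF⟩ := h
    have : n ∈ PF S := hPF ▸ Set.mem_Icc.mpr ⟨Nat.one_le_iff_ne_zero.mpr hn0, Nat.lt_succ_iff.mp hnF⟩
    exact this.1 hn
  · rintro (rfl | h)
    · exact h0
    · by_contra hn
      exact absurd (hFle n hn) (by omega)
end

section
/- Let F ≥ 5 and 2 < t ≤ F with F + t even, and let S be an almost symmetric numerical semigroup with F(S) = F and t(S) = t - 2. Set x = m(S) and S' = S \ {x}. Then S' is an almost symmetric numerical semigroup with F(S') = F, t(S') = t, and PF(S') = PF(S) ∪ {x, F - x}. -/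
lemma frob_mem {S : Set ℕ} {F : ℕ} (hFr : IsFrobenius S F) {n : ℕ} (h : F < n) : n ∈ S := by
  by_contra hn
  exact absurd (hFr.2 n hn) (by omega)

lemma F_mem_PF {S : Set ℕ} {F : ℕ} (hFr : IsFrobenius S F) : F ∈ PF S := by
  refine ⟨hFr.1, fun s hs hs0 => frob_mem hFr (by omega)⟩

lemma PF_finite {S : Set ℕ} (hS : IsNumericalSemigroup S) : (PF S).Finite :=
  hS.2.2.subset (fun x hx => hx.1)

lemma key_lemma {S : Set ℕ} {F : ℕ} (hS : IsNumericalSemigroup S) (hFr : IsFrobenius S F)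
    (hAS : 2 * genus S = F + typ S) :
    ∀ x, x ∉ S → F - x ∉ S → x ∈ PF S := by
  classical
  intro x hx hFx
  rcases eq_or_lt_of_le (hFr.2 x hx) with rfl | hxF
  · exact F_mem_PF hFr
  -- finsets
  have hGfin : Sᶜ.Finite := hS.2.2
  set G : Finset ℕ := hGfin.toFinset with hGdef
  have hGmem : ∀ n : ℕ, n ∈ G ↔ n ∉ S := by
    intro n; simp [hGdef, Set.Finite.mem_toFinset]
  have hGsub : G ⊆ Finset.range (F + 1) := by
    intro n hn
    simp only [Finset.mem_range]
    have := hFr.2 n ((hGmem n).1 hn)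
    omega
  set T : Finset ℕ := (Finset.range (F + 1)).filter (· ∈ S) with hTdef
  have hTcard : T.card + G.card = F + 1 := by
    have : T = Finset.range (F + 1) \ G := by
      ext n
      simp only [hTdef, Finset.mem_filter, Finset.mem_sdiff, hGmem]
      tauto
    rw [this, Finset.card_sdiff_add_card_eq_card hGsub, Finset.card_range]
  set B : Finset ℕ := T.image (fun y => F - y) with hBdef
  have hBcard : B.card = T.card := by
    apply Finset.card_image_of_injOn
    intro a ha b hb hab
    have ha' : a < F + 1 := by
      have := Finset.mem_coe.mp ha
      simp only [hTdef, Finset.mem_filter, Finset.mem_range] at this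
      exact this.1
    have hb' : b < F + 1 := by
      have := Finset.mem_coe.mp hb
      simp only [hTdef, Finset.mem_filter, Finset.mem_range] at this
      exact this.1
    have hab' : F - a = F - b := hab
    omega
  have hBmem : ∀ n : ℕ, n ∈ B ↔ (n ≤ F ∧ F - n ∈ S) := by
    intro n
    simp only [hBdef, Finset.mem_image, hTdef, Finset.mem_filter, Finset.mem_range]
    constructor
    · rintro ⟨y, ⟨hy1, hy2⟩, rfl⟩
      constructor
      · omega
      · have : F - (F - y) = y := by omega
        rw [this]; exact hy2
    · rintro ⟨h1, h2⟩
      exact ⟨F - n, ⟨by omega, h2⟩, by omega⟩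
  have hBG : B ⊆ G := by
    intro n hn
    rw [hBmem] at hn
    rw [hGmem]
    intro hnS
    have : n + (F - n) ∈ S := hS.2.1 n hnS (F - n) hn.2
    have hF : F ∈ S := by
      have : n + (F - n) = F := by omega
      rwa [this] at ‹n + (F - n) ∈ S›
    exact hFr.1 hF
  set L : Finset ℕ := G \ B with hLdef
  have hLcard : L.card + B.card = G.card := Finset.card_sdiff_add_card_eq_card hBG
  have hLmem : ∀ n : ℕ, n ∈ L ↔ (n ∉ S ∧ F - n ∉ S) := by
    intro n
    simp only [hLdef, Finset.mem_sdiff, hGmem, hBmem]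
    constructor
    · rintro ⟨h1, h2⟩
      refine ⟨h1, fun hc => h2 ⟨hFr.2 n h1, hc⟩⟩
    · rintro ⟨h1, h2⟩
      exact ⟨h1, fun hc => h2 hc.2⟩
  -- PF finset
  have hPfin : (PF S).Finite := PF_finite hS
  set P : Finset ℕ := hPfin.toFinset with hPdef
  have hPmem : ∀ n : ℕ, n ∈ P ↔ n ∈ PF S := by
    intro n; simp [hPdef]
  have hgen : genus S = G.card := by
    rw [genus, Set.ncard_eq_toFinset_card _ hGfin]
  have htypP : typ S = P.card := by
    rw [typ, Set.ncard_eq_toFinset_card _ hPfin]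
  have hFP : F ∈ P := (hPmem F).2 (F_mem_PF hFr)
  have hsub : P \ {F} ⊆ L := by
    intro n hn
    rw [Finset.mem_sdiff, Finset.mem_singleton, hPmem] at hn
    obtain ⟨⟨hn1, hn2⟩, hnF⟩ := hn
    rw [hLmem]
    refine ⟨hn1, fun hc => ?_⟩
    have hnle : n ≤ F := hFr.2 n hn1
    have h0 : F - n ≠ 0 := by omega
    have := hn2 (F - n) hc h0
    have : F ∈ S := by
      have he : n + (F - n) = F := by omega
      rwa [he] at this
    exact hFr.1 this
  have hcardPF : (P \ {F}).card + 1 = P.card := by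
    have : (P \ {F}).card = P.card - 1 := by
      rw [Finset.sdiff_singleton_eq_erase, Finset.card_erase_of_mem hFP]
    have hpos : 0 < P.card := Finset.card_pos.2 ⟨F, hFP⟩
    omega
  have heq : P \ {F} = L := by
    apply Finset.eq_of_subset_of_card_le hsub
    omega
  have : x ∈ L := (hLmem x).2 ⟨hx, hFx⟩
  rw [← heq, Finset.mem_sdiff, hPmem] at this
  exact this.1

theorem stmt17 (F t : ℕ) (hF : 5 ≤ F) (ht2 : 2 < t) (htF : t ≤ F)
    (hpar : Even (F + t)) (S : Set ℕ) (m : ℕ)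
    (hS : IsNumericalSemigroup S) (hFr : IsFrobenius S F)
    (htyp : typ S = t - 2) (hAS : 2 * genus S = F + typ S)
    (hm : IsMultiplicity S m) :
    IsNumericalSemigroup (S \ {m}) ∧ IsFrobenius (S \ {m}) F ∧
    typ (S \ {m}) = t ∧
    2 * genus (S \ {m}) = F + typ (S \ {m}) ∧
    PF (S \ {m}) = PF S ∪ {m, F - m} := by
  obtain ⟨hmS, hm0, hmin⟩ := hm
  have hgap : ∀ n : ℕ, 0 < n → n < m → n ∉ S := by
    intro n h1 h2 hn
    have := hmin n hn (by omega)
    omega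
  have hmF1 : m ≤ F + 1 := by
    by_contra h
    have : m - 1 ∉ S := hgap (m - 1) (by omega) (by omega)
    have := hFr.2 _ this
    omega
  -- m ≤ F
  have hmF : m ≤ F := by
    rcases eq_or_lt_of_le hmF1 with he | h
    · exfalso
      have hSc : Sᶜ = Set.Icc 1 F := by
        ext n
        simp only [Set.mem_compl_iff, Set.mem_Icc]
        constructor
        · intro hn
          have h1 : n ≠ 0 := fun h => hn (h ▸ hS.1)
          exact ⟨by omega, hFr.2 n hn⟩
        · rintro ⟨h1, h2⟩ hn
          have := hmin n hn (by omega)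
          omega
      have hPF : PF S = Sᶜ := by
        ext x
        constructor
        · exact fun hx => hx.1
        · intro hx
          refine ⟨hx, fun s hs hs0 => frob_mem hFr ?_⟩
          have := hmin s hs hs0
          omega
      have : typ S = F := by
        rw [typ, hPF, hSc, ← Finset.coe_Icc, Set.ncard_coe_finset, Nat.card_Icc]
        omega
      omega
    · omega
  have hFmS : F - m ∉ S := by
    intro h
    have := hS.2.1 _ h m hmS
    have he : F - m + m = F := by omega
    rw [he] at this
    exact hFr.1 this
  have hFne : m ≠ F - m := by
    intro h
    have h2 : m + m ∈ S := hS.2.1 m hmS m hmS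
    have : F = m + m := by omega
    rw [← this] at h2
    exact hFr.1 h2
  have hcompl : (S \ {m})ᶜ = insert m Sᶜ := by
    ext n
    simp only [Set.mem_compl_iff, Set.mem_diff, Set.mem_singleton_iff, Set.mem_insert_iff]
    tauto
  -- numerical semigroup
  have hNS : IsNumericalSemigroup (S \ {m}) := by
    refine ⟨⟨hS.1, by simp; omega⟩, ?_, ?_⟩
    · rintro a ⟨haS, ham⟩ b ⟨hbS, hbm⟩
      simp only [Set.mem_singleton_iff] at ham hbm
      refine ⟨hS.2.1 a haS b hbS, ?_⟩
      simp only [Set.mem_singleton_iff]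
      rcases Nat.eq_zero_or_pos a with rfl | ha0
      · simpa using hbm
      rcases Nat.eq_zero_or_pos b with rfl | hb0
      · simpa using ham
      have := hmin a haS (by omega)
      omega
    · rw [hcompl]
      exact (hS.2.2).insert m
  -- Frobenius
  have hFrob : IsFrobenius (S \ {m}) F := by
    refine ⟨fun h => hFr.1 h.1, fun n hn => ?_⟩
    by_cases hnS : n ∈ S
    · have : n = m := by
        by_contra h
        exact hn ⟨hnS, h⟩
      omega
    · exact hFr.2 n hnS
  -- PF equality
  have hPFeq : PF (S \ {m}) = PF S ∪ {m, F - m} := by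
    ext x
    simp only [Set.mem_union, Set.mem_insert_iff, Set.mem_singleton_iff]
    constructor
    · rintro ⟨hx1, hx2⟩
      by_cases hxm : x = m
      · right; left; exact hxm
      by_cases hxFm : x = F - m
      · right; right; exact hxFm
      left
      have hxS : x ∉ S := by
        intro h
        exact hx1 ⟨h, hxm⟩
      refine ⟨hxS, fun s hs hs0 => ?_⟩
      by_cases hsm : s = m
      · rw [hsm]
        -- need x + m ∈ S
        have hxF : x ≤ F := hFr.2 x hxS
        by_cases hc : F - x ∈ S
        · rcases eq_or_lt_of_le hxF with rfl | hlt
          · exact frob_mem hFr (by omega)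
          · exfalso
            have h1 : F - x ≠ m := by omega
            have h2 : F - x ≠ 0 := by omega
            have := hx2 (F - x) ⟨hc, h1⟩ h2
            have he : x + (F - x) = F := by omega
            rw [he] at this
            exact hFr.1 this.1
        · exact (key_lemma hS hFr hAS x hxS hc).2 m hmS hm0
      · have := hx2 s ⟨hs, hsm⟩ hs0
        exact this.1
    · intro hx
      rcases hx with hx | hxm | hxm
      rotate_left
      · rw [hxm]
        refine ⟨by simp, fun s hs hs0 => ?_⟩
        have hsm : m < s := lt_of_le_of_ne (hmin s hs.1 hs0) (Ne.symm hs.2)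
        refine ⟨hS.2.1 m hmS s hs.1, ?_⟩
        simp only [Set.mem_singleton_iff]
        omega
      · rw [hxm]
        refine ⟨fun h => hFmS h.1, fun s hs hs0 => ?_⟩
        have hsm : m < s := lt_of_le_of_ne (hmin s hs.1 hs0) (Ne.symm hs.2)
        refine ⟨frob_mem hFr (by omega), ?_⟩
        simp only [Set.mem_singleton_iff]
        omega
      · refine ⟨fun h => hx.1 h.1, fun s hs hs0 => ?_⟩
        have hsS := hs.1
        have hsm : s ≠ m := hs.2
        refine ⟨hx.2 s hsS hs0, ?_⟩
        simp only [Set.mem_singleton_iff]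
        have := hmin s hsS hs0
        omega
  -- m, F-m not in PF S
  have hmPF : m ∉ PF S := fun h => h.1 hmS
  have hFmPF : F - m ∉ PF S := by
    intro h
    have := h.2 m hmS hm0
    have he : F - m + m = F := by omega
    rw [he] at this
    exact hFr.1 this
  have hPFfin : (PF S).Finite := PF_finite hS
  -- typ
  have htyp' : typ (S \ {m}) = t := by
    rw [typ, hPFeq]
    have he : PF S ∪ {m, F - m} = insert m (insert (F - m) (PF S)) := by
      ext n
      simp only [Set.mem_union, Set.mem_insert_iff, Set.mem_singleton_iff]
      tauto
    rw [he, Set.ncard_insert_of_notMem (by simp [hFne, hmPF]) ((hPFfin.insert _)),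
      Set.ncard_insert_of_notMem hFmPF hPFfin]
    have : (PF S).ncard = typ S := rfl
    omega
  refine ⟨hNS, hFrob, htyp', ?_, hPFeq⟩
  have hgen : genus (S \ {m}) = genus S + 1 := by
    rw [genus, hcompl, Set.ncard_insert_of_notMem (by simp [hmS]) hS.2.2]
    rfl
  omega
end

section
/- Let S be an almost symmetric numerical semigroup with Frobenius number F and multiplicity m, and suppose S ≠ M(F) = {0} ∪ {n ≥ F+1}. Then both m and F - m are pseudo-Frobenius numbers of the numerical semigroup S' = S \ {m}. -/
theorem stmt18 (S : Set ℕ) (F m : ℕ)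
    (hS : IsNumericalSemigroup S) (hFr : IsFrobenius S F)
    (hm : IsMultiplicity S m) (hAS : 2 * genus S = F + typ S)
    (hne : S ≠ {0} ∪ {n : ℕ | F + 1 ≤ n}) :
    m ∈ PF (S \ {m}) ∧ F - m ∈ PF (S \ {m}) := by
  obtain ⟨h0, hadd, hfin⟩ := hS
  obtain ⟨hmS, hm0, hmin⟩ := hm
  obtain ⟨hFnot, hF⟩ := hFr
  have hgt : ∀ n, F < n → n ∈ S := fun n hn => by
    by_contra h; exact absurd (hF n h) (not_le.mpr hn)
  have hm1 : m ≠ 1 := by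
    rintro rfl
    have : ∀ n, n ∈ S := fun n => by
      induction n with
      | zero => exact h0
      | succ k ih => exact hadd k ih 1 hmS
    exact hFnot (this F)
  have hm1' : m - 1 ∉ S := fun h => by
    have := hmin _ h (by omega); omega
  have hmF1 : m ≤ F + 1 := by have := hF _ hm1'; omega
  have hmF : m ≤ F := by
    rcases eq_or_lt_of_le hmF1 with h | h
    · exfalso; apply hne
      ext n
      simp only [Set.mem_union, Set.mem_singleton_iff, Set.mem_setOf_eq]
      constructor
      · intro hn
        by_cases hn0 : n = 0
        · left; exact hn0
        · right; have := hmin n hn hn0; omega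
      · rintro (rfl | hn)
        · exact h0
        · exact hgt n (by omega)
    · omega
  constructor
  · refine ⟨by simp, ?_⟩
    rintro s ⟨hsS, hsm⟩ hs0
    simp only [Set.mem_singleton_iff] at hsm
    refine ⟨hadd m hmS s hsS, ?_⟩
    simp only [Set.mem_singleton_iff]
    omega
  · have hFm : F - m ∉ S := fun h => by
      have := hadd _ h m hmS
      rw [Nat.sub_add_cancel hmF] at this
      exact hFnot this
    refine ⟨fun h => hFm h.1, ?_⟩
    rintro s ⟨hsS, hsm⟩ hs0
    simp only [Set.mem_singleton_iff] at hsm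
    have hsge : m < s := lt_of_le_of_ne (hmin s hsS hs0) (Ne.symm hsm)
    refine ⟨hgt _ (by omega), ?_⟩
    simp only [Set.mem_singleton_iff]
    omega
end

section
/- For positive integers g and t with t ≤ g, there exists an almost symmetric numerical semigroup with genus g and type t. -/
theorem stmt19 (g t : ℕ) (hg : 0 < g) (ht : 0 < t) (htg : t ≤ g) :
    ∃ (S : Set ℕ) (F : ℕ), IsNumericalSemigroup S ∧ IsFrobenius S F ∧
      genus S = g ∧ typ S = t ∧ 2 * genus S = F + typ S := by
  set S : Set ℕ := {n | n = 0 ∨ (g ≤ n ∧ n ≠ 2 * g - t)} with hS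
  have hcompl : Sᶜ = ↑(Finset.Ico 1 g ∪ {2 * g - t}) := by
    ext n
    simp only [hS, Set.mem_compl_iff, Set.mem_setOf_eq, Finset.coe_union,
      Finset.coe_singleton, Set.mem_union, Finset.coe_Ico, Set.mem_Ico,
      Set.mem_singleton_iff]
    omega
  have hgen : genus S = g := by
    rw [genus, hcompl, Set.ncard_coe_finset, Finset.card_union_of_disjoint]
    · simp only [Nat.card_Ico, Finset.card_singleton]; omega
    · simp only [Finset.disjoint_singleton_right, Finset.mem_Ico]; omega
  have hPF : PF S = ↑(Finset.Ico (g - t + 1) g ∪ {2 * g - t}) := by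
    ext x
    simp only [PF, hS, Set.mem_setOf_eq, Finset.coe_union, Finset.coe_singleton,
      Set.mem_union, Finset.coe_Ico, Set.mem_Ico, Set.mem_singleton_iff]
    constructor
    · rintro ⟨hx, hall⟩
      by_contra hcon
      push_neg at hcon
      have hx1 : x ≠ 0 ∧ (x < g ∨ x = 2 * g - t) := by omega
      have hxF : x ≠ 2 * g - t := by
        intro h; exact hcon.2 h
      have hxle : x ≤ g - t := by omega
      have hs : (2 * g - t - x) = 0 ∨ (g ≤ 2 * g - t - x ∧ 2 * g - t - x ≠ 2 * g - t) := by
        omega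
      have := hall (2 * g - t - x) hs (by omega)
      omega
    · rintro (⟨h1, h2⟩ | rfl)
      · refine ⟨by omega, fun s hs hs0 => ?_⟩
        rcases hs with h | h
        · omega
        · right; omega
      · refine ⟨by omega, fun s hs hs0 => ?_⟩
        rcases hs with h | h
        · omega
        · right; omega
  have htyp : typ S = t := by
    rw [typ, hPF, Set.ncard_coe_finset, Finset.card_union_of_disjoint]
    · simp only [Nat.card_Ico, Finset.card_singleton]; omega
    · simp only [Finset.disjoint_singleton_right, Finset.mem_Ico]; omega
  refine ⟨S, 2 * g - t, ⟨Or.inl rfl, ?_, ?_⟩, ⟨?_, ?_⟩, hgen, htyp, ?_⟩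
  · intro a ha b hb
    simp only [hS, Set.mem_setOf_eq] at *
    omega
  · rw [hcompl]; exact (Finset.Ico 1 g ∪ {2 * g - t}).finite_toSet
  · simp only [hS, Set.mem_setOf_eq]; omega
  · intro n hn
    simp only [hS, Set.mem_setOf_eq] at hn
    omega
  · rw [hgen, htyp]; omega
end
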